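/- arXiv:1308.2018 — 3 statements merged into one kernel-verified Lean document; each statement's English description precedes it below -/
import Mathlib

section
/- Let u : [0,∞) → [0,∞) be continuous, and let δ > 0 and α > β > 0 be constants. If u(t) ≤ δ + β ∫₀ᵗ e^{-α(t-s)} u(s) ds for all t ≥ 0, then u(t) ≤ δα/(α - β) for all t ≥ 0. -/
/-!
On `[0, t]` the continuous function `u` attains its maximum `m` at some `t₁`. The kernel
`s ↦ exp (-α (t₁ - s))` has mass `(1 - exp (-α t₁)) / α ≤ 1 / α` on `[0, t₁]`, so the hypothesis
at `t₁` gives `m ≤ δ + β m / α` (when `m > 0`), which rearranges to `m ≤ δ α / (α - β)`.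
-/

open Real Set intervalIntegral

theorem integral_exp_neg_mul_sub {α : ℝ} (hα : α ≠ 0) (t : ℝ) :
    ∫ s in (0:ℝ)..t, exp (-α * (t - s)) = (1 - exp (-α * t)) / α := by
  have := integral_comp_mul_add (a := 0) (b := t) exp hα (-α * t)
  simp only [mul_zero, zero_add, integral_exp, smul_eq_mul] at this
  rw [show (fun s => exp (-α * (t - s))) = fun s => exp (α * s + -α * t) by ext; ring_nf, this]
  field_simp
  ring_nf
  rw [exp_zero]

theorem integral_exp_neg_mul_sub_mul_le {u : ℝ → ℝ} {α t m : ℝ} (hα : 0 < α) (ht : 0 ≤ t)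
    (hm : 0 ≤ m) (hu : IntervalIntegrable u MeasureTheory.volume 0 t)
    (hum : ∀ s ∈ Icc 0 t, u s ≤ m) :
    ∫ s in (0:ℝ)..t, exp (-α * (t - s)) * u s ≤ m / α := by
  have hkernel : Continuous fun s => exp (-α * (t - s)) := by fun_prop
  calc ∫ s in (0:ℝ)..t, exp (-α * (t - s)) * u s
      ≤ ∫ s in (0:ℝ)..t, exp (-α * (t - s)) * m :=
        integral_mono_on ht (hu.continuousOn_mul hkernel.continuousOn)
          ((hkernel.mul continuous_const).intervalIntegrable _ _)
          fun s hs => mul_le_mul_of_nonneg_left (hum s hs) (exp_pos _).le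
    _ = m * (1 - exp (-α * t)) / α := by
        rw [integral_mul_const, integral_exp_neg_mul_sub hα.ne']
        ring
    _ ≤ m / α := by
        gcongr
        exact mul_le_of_le_one_right hm (sub_le_self _ (exp_pos _).le)

theorem gronwall_exponential_kernel_general
    (u : ℝ → ℝ) (δ α β : ℝ)
    (hu_cont : ContinuousOn u (Set.Ici 0))
    (hδ : 0 < δ) (hβ : 0 < β) (hαβ : β < α)
    (h : ∀ t ≥ (0:ℝ), u t ≤ δ + β * ∫ s in (0:ℝ)..t, Real.exp (-α * (t - s)) * u s) :
    ∀ t ≥ (0:ℝ), u t ≤ δ * α / (α - β) := by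
  intro t ht
  have hα : 0 < α := hβ.trans hαβ
  have hgap : 0 < α - β := sub_pos.2 hαβ
  obtain ⟨t₁, ⟨ht₁, ht₁t⟩, hmax⟩ := isCompact_Icc.exists_isMaxOn (nonempty_Icc.2 ht)
    (hu_cont.mono Icc_subset_Ici_self)
  refine (hmax (right_mem_Icc.2 ht) : u t ≤ u t₁).trans ?_
  rcases le_or_gt (u t₁) 0 with hneg | hpos
  · exact hneg.trans (by positivity)
  have hintegral : ∫ s in (0:ℝ)..t₁, exp (-α * (t₁ - s)) * u s ≤ u t₁ / α :=
    integral_exp_neg_mul_sub_mul_le hα ht₁ hpos.le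
      ((hu_cont.mono Icc_subset_Ici_self).intervalIntegrable_of_Icc ht₁)
      fun s hs => hmax ⟨hs.1, hs.2.trans ht₁t⟩
  have hself : u t₁ ≤ δ + β * (u t₁ / α) := (h t₁ ht₁).trans (by gcongr)
  have hcleared : u t₁ * α ≤ δ * α + β * u t₁ := by
    have := mul_le_mul_of_nonneg_right hself hα.le
    rwa [add_mul, mul_assoc, div_mul_cancel₀ _ hα.ne'] at this
  rw [le_div_iff₀ hgap]
  linarith

theorem gronwall_exponential_kernel
    (u : ℝ → ℝ) (δ α β : ℝ)
    (hu_cont : ContinuousOn u (Set.Ici 0))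
    (hu_nonneg : ∀ t ≥ (0:ℝ), 0 ≤ u t)
    (hδ : 0 < δ) (hβ : 0 < β) (hαβ : β < α)
    (h : ∀ t ≥ (0:ℝ), u t ≤ δ + β * ∫ s in (0:ℝ)..t, Real.exp (-α * (t - s)) * u s) :
    ∀ t ≥ (0:ℝ), u t ≤ δ * α / (α - β) :=
  gronwall_exponential_kernel_general u δ α β hu_cont hδ hβ hαβ h
end

section
/- Every complex root λ of the characteristic equation λ + e^{-λ} = 0 has negative real part. -/
/-!
If `Re λ ≥ 0`, then `|λ| = |e^{-λ}| = e^{-Re λ} ≤ 1`, so `|Im λ| ≤ 1 < π / 2` and `cos (Im λ) > 0`.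
But the real part of `λ = -e^{-λ}` reads `Re λ = -e^{-Re λ} cos (Im λ)`, which is then negative.
-/

namespace Complex

variable {z : ℂ}

theorem norm_eq_exp_neg_re_of_add_exp_neg_eq_zero (h : z + exp (-z) = 0) :
    ‖z‖ = Real.exp (-z.re) := by
  rw [← neg_re, ← norm_exp, ← norm_neg (exp _), ← eq_neg_of_add_eq_zero_left h]

theorem re_eq_of_add_exp_neg_eq_zero (h : z + exp (-z) = 0) :
    z.re = -(Real.exp (-z.re) * Real.cos z.im) := by
  have hre := congrArg re (eq_neg_of_add_eq_zero_left h)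
  rwa [neg_re, exp_re, neg_re, neg_im, Real.cos_neg] at hre

theorem cos_im_pos_of_add_exp_neg_eq_zero (h : z + exp (-z) = 0) (hre : 0 ≤ z.re) :
    0 < Real.cos z.im := by
  have hnorm : ‖z‖ ≤ 1 := by
    rw [norm_eq_exp_neg_re_of_add_exp_neg_eq_zero h, Real.exp_le_one_iff]
    exact neg_nonpos.mpr hre
  exact Real.cos_pos_of_le_one ((abs_im_le_norm z).trans hnorm)

end Complex

theorem char_roots_negative_real_part (lam : ℂ)
    (h : lam + Complex.exp (-lam) = 0) : lam.re < 0 := by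
  by_contra! hre
  have hcos := Complex.cos_im_pos_of_add_exp_neg_eq_zero h hre
  have hre_eq := Complex.re_eq_of_add_exp_neg_eq_zero h
  linarith [mul_pos (Real.exp_pos (-lam.re)) hcos]
end

section
/- Suppose a real constant λ satisfies λ - a - b e^{-λ} = 0 with a, b ∈ ℝ. If a < b < -a (so in particular a < 0), then λ < 0. -/
/-! If `λ ≥ 0` then `t = e^{-λ}` lies in `(0, 1]`, and `λ = a + b t = (1 - t) a + t (a + b)` is a
convex combination of the negative numbers `a` and `a + b`, a contradiction. -/

lemma add_mul_neg_of_mem_Icc {a b t : ℝ} (ha : a < 0) (hab : a + b < 0) (ht : t ∈ Set.Icc 0 1) :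
    a + b * t < 0 := by
  obtain ⟨ht0, ht1⟩ := ht
  have hcombo : (1 - t) • a + t • (a + b) < 0 :=
    convex_Iio (0 : ℝ) ha hab (sub_nonneg.mpr ht1) ht0 (sub_add_cancel 1 t)
  simp only [smul_eq_mul] at hcombo
  linarith

theorem real_char_root_negative (lam a b : ℝ)
    (hroot : lam - a - b * Real.exp (-lam) = 0)
    (hab : a < b) (hba : b < -a) : lam < 0 := by
  by_contra! hlam
  have hexp : Real.exp (-lam) ∈ Set.Icc 0 1 :=
    ⟨(Real.exp_pos _).le, Real.exp_le_one_iff.mpr (neg_nonpos.mpr hlam)⟩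
  have hneg := add_mul_neg_of_mem_Icc (a := a) (b := b) (by linarith) (by linarith) hexp
  linarith
end
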